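/- Let S be a starlike tree with branching vertex v of degree k > 2 and branch lengths r_1,…,r_k. If the average branch length (r_1 + ⋯ + r_k)/k is at least 8, then GA(S) > ABC(S). -/

import Mathlib

/-!
Every edge of the starlike tree away from the centre `v` joins vertices of degree 1 or 2, and
for such an edge the GA term exceeds the ABC term by at least `√2/6`, with equality at the
pendant edges. Each of the `k = deg v` edges at the centre loses less than `1`, because its ABC
term is below `1`. There are at least `8k` edges, so the `≥ 7k` outer edges gain
`7k√2/6 > k`.
-/

open SimpleGraph

/-- The first geometric-arithmetic index of a finite simple graph:
`GA(G) = Σ_{uv ∈ E(G)} 2√(dᵤ dᵥ)/(dᵤ + dᵥ)`. -/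
noncomputable def GA {V : Type*} [Finite V] (G : SimpleGraph V) : ℝ := by
  classical
  have : Fintype V := Fintype.ofFinite V
  exact ∑ e ∈ G.edgeFinset,
    Sym2.lift ⟨fun u v =>
      2 * Real.sqrt ((G.degree u : ℝ) * (G.degree v : ℝ)) /
        ((G.degree u : ℝ) + (G.degree v : ℝ)),
      fun u v => by
        dsimp only; rw [mul_comm ((G.degree u : ℝ)), add_comm ((G.degree u : ℝ))]⟩ e

/-- The atom-bond connectivity index of a finite simple graph:
`ABC(G) = Σ_{uv ∈ E(G)} √((dᵤ + dᵥ - 2)/(dᵤ dᵥ))`. -/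
noncomputable def ABC {V : Type*} [Finite V] (G : SimpleGraph V) : ℝ := by
  classical
  have : Fintype V := Fintype.ofFinite V
  exact ∑ e ∈ G.edgeFinset,
    Sym2.lift ⟨fun u v =>
      Real.sqrt (((G.degree u : ℝ) + (G.degree v : ℝ) - 2) /
        ((G.degree u : ℝ) * (G.degree v : ℝ))),
      fun u v => by
        dsimp only; rw [mul_comm ((G.degree u : ℝ)), add_comm ((G.degree u : ℝ))]⟩ e

/-- The degree of a vertex (classical wrapper around `SimpleGraph.degree`). -/
noncomputable def deg {V : Type*} [Finite V] (G : SimpleGraph V) (v : V) : ℕ := by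
  classical
  have : Fintype V := Fintype.ofFinite V
  exact G.degree v

/-- The maximum degree `Δ` of a finite simple graph. -/
noncomputable def maxDeg {V : Type*} [Finite V] (G : SimpleGraph V) : ℕ := by
  classical
  have : Fintype V := Fintype.ofFinite V
  exact G.maxDegree

/-- The minimum degree `δ` of a finite simple graph. -/
noncomputable def minDeg {V : Type*} [Finite V] (G : SimpleGraph V) : ℕ := by
  classical
  have : Fintype V := Fintype.ofFinite V
  exact G.minDegree

open Finset

noncomputable def gaWeight : Sym2 ℕ → ℝ :=
  Sym2.lift ⟨fun a b => 2 * √((a : ℝ) * b) / (a + b), fun a b => by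
    simp only [mul_comm, add_comm]⟩

noncomputable def abcWeight : Sym2 ℕ → ℝ :=
  Sym2.lift ⟨fun a b => √(((a : ℝ) + b - 2) / (a * b)), fun a b => by
    simp only [mul_comm, add_comm]⟩

noncomputable def SimpleGraph.degreeIndex {V : Type*} (G : SimpleGraph V) [Fintype V]
    [DecidableRel G.Adj] (φ : Sym2 ℕ → ℝ) : ℝ :=
  ∑ e ∈ G.edgeFinset, φ (e.map fun v => G.degree v)

section Weights

variable {a b : ℕ}

@[simp] lemma gaWeight_mk : gaWeight s(a, b) = 2 * √((a : ℝ) * b) / (a + b) := rfl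

@[simp] lemma abcWeight_mk : abcWeight s(a, b) = √(((a : ℝ) + b - 2) / (a * b)) := rfl

lemma gaWeight_nonneg (e : Sym2 ℕ) : 0 ≤ gaWeight e := by
  induction e using Sym2.ind with
  | _ a b => rw [gaWeight_mk]; positivity

lemma abcWeight_lt_one (ha : 1 ≤ a) (hb : 1 ≤ b) : abcWeight s(a, b) < 1 := by
  have ha' : (1 : ℝ) ≤ a := by exact_mod_cast ha
  have hb' : (1 : ℝ) ≤ b := by exact_mod_cast hb
  rw [abcWeight_mk, Real.sqrt_lt' one_pos, div_lt_iff₀ (by positivity)]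
  nlinarith

lemma sqrt_two_div_six_le_gaWeight_sub_abcWeight (ha : a ∈ Icc 1 2) (hb : b ∈ Icc 1 2) :
    √2 / 6 ≤ gaWeight s(a, b) - abcWeight s(a, b) := by
  have hsq : √2 ^ 2 = 2 := Real.sq_sqrt zero_le_two
  obtain ⟨ha1, ha2⟩ := mem_Icc.mp ha
  obtain ⟨hb1, hb2⟩ := mem_Icc.mp hb
  have hinv : (√2)⁻¹ = √2 / 2 := by field_simp; exact hsq.symm
  have hle : √2 ≤ 3 / 2 := by nlinarith [Real.sqrt_nonneg 2]
  interval_cases a <;> interval_cases b <;> norm_num [hinv] <;> linarith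

lemma neg_one_lt_gaWeight_sub_abcWeight (ha : 1 ≤ a) (hb : 1 ≤ b) :
    -1 < gaWeight s(a, b) - abcWeight s(a, b) := by
  linarith [gaWeight_nonneg s(a, b), abcWeight_lt_one ha hb]

end Weights

section Index

variable {V : Type*} [Fintype V] (G : SimpleGraph V) [DecidableRel G.Adj]

lemma deg_eq_degree (v : V) : deg G v = G.degree v := by
  unfold deg
  congr!

lemma GA_eq_degreeIndex : GA G = degreeIndex G gaWeight := by
  unfold GA degreeIndex
  refine sum_congr (by congr!) fun e _ => ?_
  induction e using Sym2.ind with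
  | _ u w => simp only [Sym2.lift_mk, Sym2.map_mk, gaWeight_mk]; congr!

lemma ABC_eq_degreeIndex : ABC G = degreeIndex G abcWeight := by
  unfold ABC degreeIndex
  refine sum_congr (by congr!) fun e _ => ?_
  induction e using Sym2.ind with
  | _ u w => simp only [Sym2.lift_mk, Sym2.map_mk, abcWeight_mk]; congr!

lemma SimpleGraph.degreeIndex_sub (φ ψ : Sym2 ℕ → ℝ) :
    degreeIndex G φ - degreeIndex G ψ = degreeIndex G (φ - ψ) :=
  (sum_sub_distrib ..).symm

end Index

lemma SimpleGraph.degreeIndex_abcWeight_lt_gaWeight {V : Type*} [Fintype V]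
    {G : SimpleGraph V} [DecidableRel G.Adj] (v : V) (hpos : ∀ u, 0 < G.degree u)
    (hle : ∀ u ≠ v, G.degree u ≤ 2) (hm : 8 * G.degree v ≤ #G.edgeFinset) :
    degreeIndex G abcWeight < degreeIndex G gaWeight := by
  classical
  set k := G.degree v
  set m := #G.edgeFinset
  set I := G.incidenceFinset v
  set f : Sym2 V → ℝ := fun e => (gaWeight - abcWeight) (e.map fun u => G.degree u)
  have hIsub : I ⊆ G.edgeFinset := G.incidenceFinset_subset v
  have hIcard : #I = k := G.card_incidenceFinset_eq_degree v
  have hfar : ∀ e ∈ G.edgeFinset \ I, √2 / 6 ≤ f e := by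
    intro e he
    induction e using Sym2.ind with
    | _ u w =>
      simp only [I, G.incidenceFinset_eq_filter, mem_sdiff, mem_filter, Sym2.mem_iff] at he
      push Not at he
      obtain ⟨hvu, hvw⟩ := he.2 he.1
      exact sqrt_two_div_six_le_gaWeight_sub_abcWeight
        (mem_Icc.mpr ⟨hpos u, hle u hvu.symm⟩) (mem_Icc.mpr ⟨hpos w, hle w hvw.symm⟩)
  have hnear : ∀ e ∈ I, -1 < f e := by
    intro e _
    induction e using Sym2.ind with
    | _ u w => exact neg_one_lt_gaWeight_sub_abcWeight (hpos u) (hpos w)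
  have hfar_sum : ((m - k : ℕ) : ℝ) * (√2 / 6) ≤ ∑ e ∈ G.edgeFinset \ I, f e := by
    simpa [card_sdiff_of_subset hIsub, hIcard] using card_nsmul_le_sum _ f _ hfar
  have hnear_sum : -(k : ℝ) < ∑ e ∈ I, f e := by
    have hI : I.Nonempty := card_pos.mp (hIcard ▸ hpos v)
    simpa [hIcard] using sum_lt_sum_of_nonempty hI hnear
  have hsqrt : 1 ≤ √2 := Real.one_le_sqrt.mpr one_le_two
  have hmk : (8 * k : ℝ) ≤ m := by exact_mod_cast hm
  have hk : (0 : ℝ) < k := by exact_mod_cast hpos v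
  rw [← sub_pos, degreeIndex_sub]
  calc (0 : ℝ) < ((m - k : ℕ) : ℝ) * (√2 / 6) - k := by
        rw [Nat.cast_sub (by omega)]
        nlinarith [mul_le_mul_of_nonneg_left hsqrt (by linarith : (0 : ℝ) ≤ m - k)]
    _ < ∑ e ∈ G.edgeFinset \ I, f e + ∑ e ∈ I, f e := by linarith
    _ = degreeIndex G (gaWeight - abcWeight) := sum_sdiff hIsub

/-- Let `S` be a starlike tree with branching vertex `v` of degree `k > 2`.
If the average branch length `(r₁ + ⋯ + r_k)/k = (|V(S)| − 1)/k` is at least `8`, then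
`GA(S) > ABC(S)`. -/
theorem stmt_13 {V : Type*} [Fintype V] (S : SimpleGraph V)
    (hS : S.IsTree) (v : V) (hv : 2 < deg S v)
    (huniq : ∀ u : V, 2 < deg S u → u = v)
    (havg : (8 : ℝ) ≤ ((Fintype.card V : ℝ) - 1) / (deg S v : ℝ)) :
    ABC S < GA S := by
  classical
  simp only [deg_eq_degree] at hv huniq havg
  obtain ⟨w, hvw⟩ := (S.degree_pos_iff_exists_adj v).mp (by omega)
  have : Nontrivial V := ⟨v, w, hvw.ne⟩
  have hedges : (Fintype.card V : ℝ) - 1 = #S.edgeFinset := by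
    rw [← hS.card_edgeFinset]; push_cast; ring
  rw [hedges, le_div_iff₀ (by positivity)] at havg
  rw [ABC_eq_degreeIndex, GA_eq_degreeIndex]
  exact S.degreeIndex_abcWeight_lt_gaWeight v
    (fun u => hS.connected.preconnected.degree_pos_of_nontrivial u)
    (fun u hu => not_lt.mp fun h => hu (huniq u h)) (by exact_mod_cast havg)
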